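/- Let m ≥ 2 and let a_1,…,a_m be positive integers with gcd(a_1,…,a_m) = 1, and set N = −a_1 + Σ_{i=2}^m a_i(d_{i−1}/d_i − 1). If N ≥ 0 and N cannot be written as a_1x_1 + ⋯ + a_mx_m with nonnegative integers x_1,…,x_m, then the sequence (a_1,…,a_m) is telescopic (Brauer–Seelbinder: equality in Brauer's bound forces the telescopic condition). -/

import Mathlib

/-!
Induct on `m`. Put `d = d_m`, `b_j = a_j / d` for `j ≤ m` and `c = a_{m+1}`, which is coprime to
`d`. Then `N(a) = d N(b) + c (d - 1)`, and every integer is `d k + c s` with `0 ≤ s < d`;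
such an integer is representable by `a` if `k` is representable by `b`, and conversely as soon as
`c` is representable by `b`.

If `N(a)` is not representable, neither is `N(b)`, so `b` is telescopic by induction. For a
telescopic sequence `n ↦ N - n` swaps representable and non-representable integers (by the same
reduction). So if `c` were not representable by `b`, then `N(b) - c` would be, and
`N(a) = d (N(b) - c) + (2d - 1) c` would be representable too. Hence `c` is representable by `b`,
which together with `b` telescopic is the telescopic condition for `a`.
-/

/-- `dseq a i = gcd(a_1, …, a_i)`. -/
def dseq (a : ℕ → ℕ) (i : ℕ) : ℕ := (Finset.Icc 1 i).gcd a

/-- The telescopic condition: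
`a_i/d_i ∈ (a_1/d_{i-1})ℤ_{≥0} + ⋯ + (a_{i-1}/d_{i-1})ℤ_{≥0}` for `2 ≤ i ≤ m`. -/
def Telescopic (m : ℕ) (a : ℕ → ℕ) : Prop :=
  ∀ i, 2 ≤ i → i ≤ m →
    ∃ k : ℕ → ℕ,
      a i / dseq a i = ∑ j ∈ Finset.Icc 1 (i - 1), (a j / dseq a (i - 1)) * k j

open Finset

def Representable (m : ℕ) (a : ℕ → ℕ) (n : ℤ) : Prop :=
  ∃ x : ℕ → ℕ, n = ∑ i ∈ Icc 1 m, (a i : ℤ) * (x i : ℤ)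

def brauerBound (m : ℕ) (a : ℕ → ℕ) : ℤ :=
  -(a 1 : ℤ) + ∑ i ∈ Icc 2 m, (a i : ℤ) * (((dseq a (i - 1) / dseq a i : ℕ) : ℤ) - 1)

def reduced (a : ℕ → ℕ) (m : ℕ) : ℕ → ℕ := fun j => a j / dseq a m

variable {a : ℕ → ℕ} {m : ℕ}

@[simp]
lemma dseq_one (a : ℕ → ℕ) : dseq a 1 = a 1 := by
  simp [dseq]

lemma dseq_succ (a : ℕ → ℕ) (i : ℕ) : dseq a (i + 1) = Nat.gcd (a (i + 1)) (dseq a i) := by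
  have h : Icc 1 (i + 1) = insert (i + 1) (Icc 1 i) := by
    ext x
    simp only [mem_insert, mem_Icc]
    omega
  rw [dseq, h, gcd_insert]
  rfl

lemma dseq_dvd {i j : ℕ} (hj : 1 ≤ j) (hji : j ≤ i) : dseq a i ∣ a j :=
  gcd_dvd (mem_Icc.2 ⟨hj, hji⟩)

lemma dseq_pos (h1 : 0 < a 1) {i : ℕ} (hi : 1 ≤ i) : 0 < dseq a i :=
  Nat.pos_of_dvd_of_pos (dseq_dvd le_rfl hi) h1

lemma dseq_mul_reduced {j : ℕ} (hj : 1 ≤ j) (hjm : j ≤ m) : dseq a m * reduced a m j = a j :=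
  Nat.mul_div_cancel' (dseq_dvd hj hjm)

lemma dseq_eq_mul_dseq_reduced {i : ℕ} (him : i ≤ m) :
    dseq a i = dseq a m * dseq (reduced a m) i := by
  have h : ∀ j ∈ Icc 1 i, a j = reduced a m j * dseq a m := fun j hj => by
    rw [mul_comm, dseq_mul_reduced (mem_Icc.1 hj).1 ((mem_Icc.1 hj).2.trans him)]
  rw [dseq, gcd_congr rfl h, Finset.gcd_mul_right]
  simp [dseq, mul_comm]

lemma dseq_reduced_self (h1 : 0 < a 1) (hm : 1 ≤ m) : dseq (reduced a m) m = 1 := by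
  have h := dseq_eq_mul_dseq_reduced (a := a) (le_refl m)
  have hd := dseq_pos h1 hm
  exact (Nat.mul_eq_left hd.ne').1 h.symm

lemma reduced_one_pos (h1 : 0 < a 1) (hm : 1 ≤ m) : 0 < reduced a m 1 :=
  Nat.div_pos (Nat.le_of_dvd h1 (dseq_dvd le_rfl hm)) (dseq_pos h1 hm)

lemma reduced_div_dseq_reduced (h1 : 0 < a 1) {i j : ℕ} (hj : 1 ≤ j) (hji : j ≤ i)
    (him : i ≤ m) : reduced a m j / dseq (reduced a m) i = a j / dseq a i := by
  rw [← dseq_mul_reduced (a := a) hj (hji.trans him), dseq_eq_mul_dseq_reduced (a := a) him,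
    Nat.mul_div_mul_left _ _ (dseq_pos h1 (hj.trans (hji.trans him)))]

lemma coprime_of_dseq_succ_eq_one (hgcd : dseq a (m + 1) = 1) :
    Nat.Coprime (a (m + 1)) (dseq a m) := by
  rw [dseq_succ] at hgcd
  exact hgcd

lemma Representable.add_mul {u v : ℤ} (hu : Representable m a u) (hv : Representable m a v)
    (t : ℕ) : Representable m a (u + v * t) := by
  obtain ⟨x, rfl⟩ := hu
  obtain ⟨y, rfl⟩ := hv
  refine ⟨fun i => x i + t * y i, ?_⟩
  rw [sum_mul, ← sum_add_distrib]
  refine sum_congr rfl fun i _ => ?_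
  push_cast
  ring

lemma representable_one_iff (ha : a 1 = 1) {n : ℤ} : Representable 1 a n ↔ 0 ≤ n := by
  constructor
  · rintro ⟨x, rfl⟩
    positivity
  · intro hn
    exact ⟨fun _ => n.toNat, by simp [ha, hn]⟩

lemma sum_eq_dseq_mul_sum_reduced (x : ℕ → ℕ) :
    ∑ i ∈ Icc 1 m, (a i : ℤ) * x i =
      dseq a m * ∑ i ∈ Icc 1 m, (reduced a m i : ℤ) * x i := by
  rw [mul_sum]
  refine sum_congr rfl fun i hi => ?_
  rw [← mul_assoc, ← dseq_mul_reduced (a := a) (mem_Icc.1 hi).1 (mem_Icc.1 hi).2]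
  push_cast
  ring

lemma Representable.dseq_mul_add_mul {k : ℤ} (hk : Representable m (reduced a m) k) (s : ℕ) :
    Representable (m + 1) a (dseq a m * k + a (m + 1) * s) := by
  obtain ⟨x, rfl⟩ := hk
  refine ⟨Function.update x (m + 1) s, ?_⟩
  rw [sum_Icc_succ_top (by omega), ← sum_eq_dseq_mul_sum_reduced]
  congr 1
  · refine sum_congr rfl fun i hi => ?_
    rw [Function.update_of_ne (by grind)]
  · simp

/-- A representation of `d_m k + a_{m+1} s` uses `a_{m+1}` some `s + t d_m` times with `t ≥ 0`
(coprimality and `s < d_m`); the surplus `t d_m a_{m+1}` is absorbed by the representation of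
`a_{m+1}` by the reduced sequence. -/
lemma Representable.of_dseq_mul_add_mul (hcop : Nat.Coprime (a (m + 1)) (dseq a m))
    (hc : Representable m (reduced a m) (a (m + 1))) {k : ℤ} {s : ℕ} (hs : s < dseq a m)
    (h : Representable (m + 1) a (dseq a m * k + a (m + 1) * s)) :
    Representable m (reduced a m) k := by
  obtain ⟨x, hx⟩ := h
  rw [sum_Icc_succ_top (by omega), sum_eq_dseq_mul_sum_reduced] at hx
  set d : ℤ := (dseq a m : ℤ)
  set c : ℤ := (a (m + 1) : ℤ)
  set B := ∑ i ∈ Icc 1 m, (reduced a m i : ℤ) * x i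
  have hd : 0 < d := by omega
  have hdvd : d ∣ c * (x (m + 1) - s) := ⟨k - B, by linear_combination -hx⟩
  obtain ⟨t, ht⟩ := (Nat.isCoprime_iff_coprime.2 hcop).symm.dvd_of_dvd_mul_left hdvd
  have ht0 : 0 ≤ t := by
    by_contra! htn
    nlinarith
  have hk : k = B + c * t := by
    apply mul_left_cancel₀ hd.ne'
    linear_combination hx + c * ht
  rw [hk, ← t.toNat_of_nonneg ht0]
  exact Representable.add_mul ⟨x, rfl⟩ hc t.toNat

lemma representable_dseq_mul_add_mul_iff (hgcd : dseq a (m + 1) = 1)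
    (hc : Representable m (reduced a m) (a (m + 1))) {k : ℤ} {s : ℕ} (hs : s < dseq a m) :
    Representable (m + 1) a (dseq a m * k + a (m + 1) * s) ↔ Representable m (reduced a m) k :=
  ⟨.of_dseq_mul_add_mul (coprime_of_dseq_succ_eq_one hgcd) hc hs, (·.dseq_mul_add_mul s)⟩

lemma exists_eq_mul_add_mul_of_coprime {c d : ℕ} (hcop : Nat.Coprime c d) (hd : 0 < d) (n : ℤ) :
    ∃ k : ℤ, ∃ s : ℕ, s < d ∧ n = d * k + c * s := by
  obtain ⟨u, v, huv⟩ := Nat.isCoprime_iff_coprime.2 hcop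
  have hdz : (d : ℤ) ≠ 0 := by exact_mod_cast hd.ne'
  have hlt := Int.emod_lt_of_pos (n * u) (by exact_mod_cast hd : (0 : ℤ) < d)
  refine ⟨n * v + c * (n * u / d), (n * u % d).toNat, by omega, ?_⟩
  rw [Int.toNat_of_nonneg (Int.emod_nonneg _ hdz), Int.emod_def]
  linear_combination -n * huv

lemma brauerBound_one (ha : a 1 = 1) : brauerBound 1 a = -1 := by
  simp [brauerBound, ha]

lemma brauerBound_succ (h1 : 0 < a 1) (hm : 1 ≤ m) (hgcd : dseq a (m + 1) = 1) :
    brauerBound (m + 1) a =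
      dseq a m * brauerBound m (reduced a m) + a (m + 1) * ((dseq a m : ℤ) - 1) := by
  have hterm : ∀ i ∈ Icc 2 m,
      (a i : ℤ) * (((dseq a (i - 1) / dseq a i : ℕ) : ℤ) - 1) =
        dseq a m * ((reduced a m i : ℤ) *
          (((dseq (reduced a m) (i - 1) / dseq (reduced a m) i : ℕ) : ℤ) - 1)) := by
    intro i hi
    obtain ⟨hi2, him⟩ := mem_Icc.1 hi
    rw [dseq_eq_mul_dseq_reduced (a := a) (by omega : i - 1 ≤ m), dseq_eq_mul_dseq_reduced him,
      Nat.mul_div_mul_left _ _ (dseq_pos h1 hm),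
      ← dseq_mul_reduced (a := a) (by omega : 1 ≤ i) him]
    push_cast
    ring
  rw [brauerBound, brauerBound, sum_Icc_succ_top (by omega), sum_congr rfl hterm, ← mul_sum,
    Nat.add_sub_cancel, hgcd, Nat.div_one, ← dseq_mul_reduced (a := a) le_rfl hm]
  push_cast
  ring

lemma telescopic_succ_iff (h1 : 0 < a 1) (hm : 1 ≤ m) (hgcd : dseq a (m + 1) = 1) :
    Telescopic (m + 1) a ↔
      Telescopic m (reduced a m) ∧ Representable m (reduced a m) (a (m + 1)) := by
  have transfer : ∀ i, 2 ≤ i → i ≤ m → ∀ k : ℕ → ℕ,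
      (reduced a m i / dseq (reduced a m) i =
          ∑ j ∈ Icc 1 (i - 1), reduced a m j / dseq (reduced a m) (i - 1) * k j) ↔
        a i / dseq a i = ∑ j ∈ Icc 1 (i - 1), a j / dseq a (i - 1) * k j := by
    intro i hi2 him k
    rw [reduced_div_dseq_reduced h1 (by omega) le_rfl him]
    refine Eq.congr_right (sum_congr rfl fun j hj => ?_)
    rw [reduced_div_dseq_reduced h1 (mem_Icc.1 hj).1 (mem_Icc.1 hj).2 (by omega)]
  have top : (∃ k : ℕ → ℕ, a (m + 1) / dseq a (m + 1) =
        ∑ j ∈ Icc 1 (m + 1 - 1), a j / dseq a (m + 1 - 1) * k j) ↔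
      Representable m (reduced a m) (a (m + 1)) := by
    rw [hgcd, Nat.div_one, Nat.add_sub_cancel]
    refine exists_congr fun k => ?_
    rw [← Nat.cast_inj (R := ℤ)]
    push_cast
    rfl
  constructor
  · intro ht
    refine ⟨fun i hi2 him => ?_, top.1 (ht (m + 1) (by omega) le_rfl)⟩
    obtain ⟨k, hk⟩ := ht i hi2 (by omega)
    exact ⟨k, (transfer i hi2 him k).2 hk⟩
  · rintro ⟨ht, hc⟩ i hi2 him
    rcases Nat.lt_or_ge i (m + 1) with him' | him'
    · obtain ⟨k, hk⟩ := ht i hi2 (by omega)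
      exact ⟨k, (transfer i hi2 (by omega) k).1 hk⟩
    · obtain rfl : i = m + 1 := by omega
      exact top.2 hc

theorem Telescopic.representable_iff_not_representable_sub (ht : Telescopic m a)
    (h1 : 0 < a 1) (hm : 1 ≤ m) (hgcd : dseq a m = 1) (n : ℤ) :
    Representable m a n ↔ ¬ Representable m a (brauerBound m a - n) := by
  induction m, hm using Nat.le_induction generalizing a n with
  | base =>
    rw [dseq_one] at hgcd
    rw [representable_one_iff hgcd, representable_one_iff hgcd, brauerBound_one hgcd]
    omega
  | succ m hm ih =>
    obtain ⟨hbt, hc⟩ := (telescopic_succ_iff h1 hm hgcd).1 ht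
    have hd := dseq_pos h1 hm
    obtain ⟨k, s, hs, rfl⟩ :=
      exists_eq_mul_add_mul_of_coprime (coprime_of_dseq_succ_eq_one hgcd) hd n
    have hsub : brauerBound (m + 1) a - (dseq a m * k + a (m + 1) * s) =
        dseq a m * (brauerBound m (reduced a m) - k) + a (m + 1) * (dseq a m - 1 - s : ℕ) := by
      have hcast : ((dseq a m - 1 - s : ℕ) : ℤ) = dseq a m - 1 - s := by omega
      rw [brauerBound_succ h1 hm hgcd, hcast]
      ring
    rw [hsub, representable_dseq_mul_add_mul_iff hgcd hc hs,
      representable_dseq_mul_add_mul_iff hgcd hc (by omega)]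
    exact ih hbt (reduced_one_pos h1 hm) (dseq_reduced_self h1 hm) k

theorem telescopic_of_not_representable_brauerBound (h1 : 0 < a 1) (hm : 1 ≤ m)
    (hgcd : dseq a m = 1) (hN : ¬ Representable m a (brauerBound m a)) : Telescopic m a := by
  induction m, hm using Nat.le_induction generalizing a with
  | base =>
    intro i hi2 hi1
    omega
  | succ m hm ih =>
    have hb1 := reduced_one_pos h1 hm
    have hbgcd := dseq_reduced_self h1 hm
    have hNsucc := brauerBound_succ h1 hm hgcd
    have hd := dseq_pos h1 hm
    have hNb : ¬ Representable m (reduced a m) (brauerBound m (reduced a m)) := by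
      intro hb
      apply hN
      convert hb.dseq_mul_add_mul (dseq a m - 1) using 1
      have hcast : ((dseq a m - 1 : ℕ) : ℤ) = dseq a m - 1 := by omega
      rw [hNsucc, hcast]
    have hbt := ih hb1 hbgcd hNb
    have hc : Representable m (reduced a m) (a (m + 1)) := by
      by_contra hc
      rw [hbt.representable_iff_not_representable_sub hb1 hm hbgcd, not_not] at hc
      apply hN
      convert hc.dseq_mul_add_mul (2 * dseq a m - 1) using 1
      have hcast : ((2 * dseq a m - 1 : ℕ) : ℤ) = 2 * dseq a m - 1 := by omega
      rw [hNsucc, hcast]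
      ring
    exact (telescopic_succ_iff h1 hm hgcd).2 ⟨hbt, hc⟩

theorem brauer_seelbinder_general
    (m : ℕ) (a : ℕ → ℕ)
    (hpos : ∀ i, 1 ≤ i → i ≤ m → 0 < a i)
    (hgcd : (Finset.Icc 1 m).gcd a = 1)
    (N : ℤ)
    (hN : N = -(a 1 : ℤ) + ∑ i ∈ Finset.Icc 2 m,
        (a i : ℤ) * (((dseq a (i - 1) / dseq a i : ℕ) : ℤ) - 1))
    (hnotrep : ¬ ∃ x : ℕ → ℕ, N = ∑ i ∈ Finset.Icc 1 m, (a i : ℤ) * (x i : ℤ)) :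
    Telescopic m a := by
  have hm : 1 ≤ m := Nat.one_le_iff_ne_zero.2 fun hm => by simp [hm] at hgcd
  subst hN
  exact telescopic_of_not_representable_brauerBound (hpos 1 le_rfl hm) hm hgcd hnotrep

/-- **Brauer–Seelbinder.**  If `N = -a_1 + ∑_{i=2}^m a_i (d_{i-1}/d_i - 1)` is
nonnegative and not representable as `a_1 x_1 + ⋯ + a_m x_m` with nonnegative
integers `x_i`, then the sequence `(a_1, …, a_m)` is telescopic. -/
theorem brauer_seelbinder
    (m : ℕ) (hm : 2 ≤ m) (a : ℕ → ℕ)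
    (hpos : ∀ i, 1 ≤ i → i ≤ m → 0 < a i)
    (hgcd : (Finset.Icc 1 m).gcd a = 1)
    (N : ℤ)
    (hN : N = -(a 1 : ℤ) + ∑ i ∈ Finset.Icc 2 m,
        (a i : ℤ) * (((dseq a (i - 1) / dseq a i : ℕ) : ℤ) - 1))
    (hN0 : 0 ≤ N)
    (hnotrep : ¬ ∃ x : ℕ → ℕ, N = ∑ i ∈ Finset.Icc 1 m, (a i : ℤ) * (x i : ℤ)) :
    Telescopic m a :=
  brauer_seelbinder_general m a hpos hgcd N hN hnotrep
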